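/- Let n ≥ 2, let C, D ∈ ℝ^{n×n} be symmetric, and fix V ∈ ℝ^{n×(n−1)} with Vᵀ·1 = 0 and Vᵀ V = I_{n−1}; write Ĉ := Vᵀ C V and D̂ := Vᵀ D V. Define OGW_lb(C,D) := (1/n²)·[ ‖C‖_F² + ‖D‖_F² − 2·Σ_{i=1}^{n−1} λᵢ↓(Ĉ)·λᵢ↓(D̂) − (4/n)·‖Vᵀ C 1‖·‖Vᵀ D 1‖ − (2/n²)·(1ᵀ C 1)(1ᵀ D 1) ]. Then OGW_lb(C,D) ≥ 0. -/

import Mathlib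

/-!
Complete `V` by the unit column `1/√n` to an orthogonal matrix `U = [V | 1/√n]`. The Frobenius
norm is invariant under `C ↦ Uᵀ C U`, and splitting `Uᵀ C U` into blocks gives
`‖C‖² = ‖Ĉ‖² + (2/n) ‖Vᵀ C 1‖² + (1ᵀ C 1)² / n²`, where `‖Ĉ‖² = ∑ λᵢ(Ĉ)²` by the spectral theorem.
Substituting this for `C` and `D` turns `n² · OGW_lb` into
`∑ (λᵢ(Ĉ) - λᵢ(D̂))² + (2/n) (‖Vᵀ C 1‖ - ‖Vᵀ D 1‖)² + (1ᵀ C 1 - 1ᵀ D 1)² / n²`.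
-/

open Matrix BigOperators

noncomputable section

/-- Squared Frobenius norm of a real matrix. -/
def frobSq {m n : ℕ} (A : Matrix (Fin m) (Fin n) ℝ) : ℝ := ∑ i, ∑ j, (A i j) ^ 2

/-- Euclidean norm of a real vector. -/
def vnorm {n : ℕ} (v : Fin n → ℝ) : ℝ := Real.sqrt (∑ i, (v i) ^ 2)

/-- Eigenvalues of a real symmetric (Hermitian) matrix, listed in descending order. -/
def eigDesc {n : ℕ} {A : Matrix (Fin n) (Fin n) ℝ} (hA : A.IsHermitian) : Fin n → ℝ :=
  fun i => (hA.eigenvalues ∘ Tuple.sort hA.eigenvalues) i.rev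

/-- Conjugating a real symmetric (Hermitian) matrix preserves symmetry. -/
theorem conjHerm {n m : ℕ} (V : Matrix (Fin n) (Fin m) ℝ) {C : Matrix (Fin n) (Fin n) ℝ}
    (hC : C.IsHermitian) : (Vᵀ * C * V).IsHermitian := by
  have h := Matrix.isHermitian_mul_mul_conjTranspose Vᵀ hC
  simpa using h


/-- The closed-form lower bound `OGW_lb` of the orthogonal Gromov-Wasserstein discrepancy. -/
def OGWlb {n : ℕ} (V : Matrix (Fin n) (Fin (n - 1)) ℝ)
    (C D : Matrix (Fin n) (Fin n) ℝ) (hC : C.IsHermitian) (hD : D.IsHermitian) : ℝ :=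
  (1 / (n : ℝ) ^ 2) * (frobSq C + frobSq D
    - 2 * ∑ i, eigDesc (conjHerm V hC) i * eigDesc (conjHerm V hD) i
    - (4 / (n : ℝ)) * vnorm ((Vᵀ * C) *ᵥ (fun _ => (1 : ℝ)))
        * vnorm ((Vᵀ * D) *ᵥ (fun _ => (1 : ℝ)))
    - (2 / (n : ℝ) ^ 2) * ((∑ i, ∑ j, C i j) * (∑ i, ∑ j, D i j)))

section SqSum

variable {m k l : Type*} [Fintype m] [Fintype k] [Fintype l]

/-- `frobSq` over arbitrary index types, so that it applies to block matrices. -/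
def sqSum (A : Matrix m k ℝ) : ℝ := ∑ i, ∑ j, A i j ^ 2

lemma sqSum_eq_trace_mul_transpose (A : Matrix m k ℝ) : sqSum A = trace (A * Aᵀ) := by
  simp [sqSum, trace, mul_apply, sq]

lemma sqSum_transpose (A : Matrix m k ℝ) : sqSum Aᵀ = sqSum A :=
  Finset.sum_comm

lemma sqSum_fromBlocks (A : Matrix m k ℝ) (B : Matrix m l ℝ) (C : Matrix l k ℝ)
    (D : Matrix l l ℝ) : sqSum (fromBlocks A B C D) = sqSum A + sqSum B + sqSum C + sqSum D := by
  simp only [sqSum, Fintype.sum_sum_type, fromBlocks_apply₁₁, fromBlocks_apply₁₂,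
    fromBlocks_apply₂₁, fromBlocks_apply₂₂, Finset.sum_add_distrib]
  ring

lemma sqSum_diagonal [DecidableEq m] (d : m → ℝ) : sqSum (diagonal d) = ∑ i, d i ^ 2 := by
  simp [sqSum, diagonal_apply]

variable [DecidableEq m]

lemma sqSum_transpose_mul_mul {U : Matrix m k ℝ} (hU : U * Uᵀ = 1) (A : Matrix m m ℝ) :
    sqSum (Uᵀ * A * U) = sqSum A := by
  rw [sqSum_eq_trace_mul_transpose, sqSum_eq_trace_mul_transpose]
  calc trace (Uᵀ * A * U * (Uᵀ * A * U)ᵀ) = trace (Uᵀ * (A * (U * Uᵀ) * Aᵀ) * U) := by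
        simp only [transpose_mul, transpose_transpose, Matrix.mul_assoc]
    _ = trace (A * Aᵀ) := by
        rw [trace_mul_cycle, hU, Matrix.mul_one, Matrix.one_mul]

lemma sqSum_eq_add_of_mul_transpose_add_mul_transpose_eq_one {V : Matrix m k ℝ}
    {W : Matrix m l ℝ} (hVW : V * Vᵀ + W * Wᵀ = 1) (A : Matrix m m ℝ) :
    sqSum A =
      sqSum (Vᵀ * A * V) + sqSum (Vᵀ * A * W) + sqSum (Wᵀ * A * V) + sqSum (Wᵀ * A * W) := by
  have hU : fromCols V W * (fromCols V W)ᵀ = 1 := by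
    rwa [transpose_fromCols, fromCols_mul_fromRows]
  rw [← sqSum_transpose_mul_mul hU A, transpose_fromCols, fromRows_mul, fromRows_mul_fromCols,
    sqSum_fromBlocks]

end SqSum

lemma frobSq_eq_sqSum {m n : ℕ} (A : Matrix (Fin m) (Fin n) ℝ) : frobSq A = sqSum A := rfl

lemma mul_transpose_add_mul_transpose_eq_one {R m k l : Type*} [CommRing R] [Fintype m]
    [Fintype k] [Fintype l] [DecidableEq m] [DecidableEq k] [DecidableEq l] (e : m ≃ k ⊕ l)
    {V : Matrix m k R} {W : Matrix m l R}
    (hV : Vᵀ * V = 1) (hVW : Vᵀ * W = 0) (hW : Wᵀ * W = 1) : V * Vᵀ + W * Wᵀ = 1 := by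
  have hWV : Wᵀ * V = 0 := by simpa using congrArg transpose hVW
  rw [← fromCols_mul_fromRows, fromCols_mul_fromRows_eq_one_comm e, fromRows_mul_fromCols,
    hV, hVW, hWV, hW, fromBlocks_one]

lemma Matrix.IsHermitian.sum_eigenvalues_sq {m : Type*} [Fintype m] [DecidableEq m]
    {A : Matrix m m ℝ} (hA : A.IsHermitian) : ∑ i, hA.eigenvalues i ^ 2 = sqSum A := by
  have hU := Unitary.coe_mul_star_self hA.eigenvectorUnitary
  have hdiag := hA.conjStarAlgAut_star_eigenvectorUnitary
  simp only [Unitary.conjStarAlgAut_apply, Unitary.coe_star, star_eq_conjTranspose,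
    conjTranspose_eq_transpose_of_trivial, transpose_transpose] at hU hdiag
  rw [← sqSum_transpose_mul_mul hU, hdiag, sqSum_diagonal]
  rfl

lemma sum_eigDesc_sq {k : ℕ} {A : Matrix (Fin k) (Fin k) ℝ} (hA : A.IsHermitian) :
    ∑ i, eigDesc hA i ^ 2 = frobSq A := by
  rw [frobSq_eq_sqSum, ← hA.sum_eigenvalues_sq]
  exact Equiv.sum_comp (Fin.revPerm.trans (Tuple.sort hA.eigenvalues)) (hA.eigenvalues · ^ 2)

lemma vnorm_sq {n : ℕ} (v : Fin n → ℝ) : vnorm v ^ 2 = ∑ i, v i ^ 2 :=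
  Real.sq_sqrt (Finset.sum_nonneg fun i _ => sq_nonneg (v i))

def normalizedOnesCol (n : ℕ) : Matrix (Fin n) (Fin 1) ℝ := of fun _ _ => (√n)⁻¹

section normalizedOnesCol

variable {n : ℕ}

lemma transpose_mul_normalizedOnesCol {k : Type*} {V : Matrix (Fin n) k ℝ}
    (hV1 : Vᵀ *ᵥ (fun _ => (1 : ℝ)) = 0) : Vᵀ * normalizedOnesCol n = 0 := by
  ext i j
  have := congrFun hV1 i
  simp_all [normalizedOnesCol, mul_apply, mulVec, dotProduct, ← Finset.sum_mul]

lemma normalizedOnesCol_transpose_mul_self (hn : n ≠ 0) :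
    (normalizedOnesCol n)ᵀ * normalizedOnesCol n = 1 := by
  ext i j
  rw [Subsingleton.elim i j]
  simp [normalizedOnesCol, mul_apply, ← sq, hn]

lemma sqSum_mul_normalizedOnesCol {m : ℕ} (M : Matrix (Fin m) (Fin n) ℝ) :
    sqSum (M * normalizedOnesCol n) = vnorm (M *ᵥ fun _ => (1 : ℝ)) ^ 2 / n := by
  simp [sqSum, vnorm_sq, normalizedOnesCol, mul_apply, mulVec, dotProduct, ← Finset.sum_mul,
    mul_pow, div_eq_mul_inv]

lemma sqSum_normalizedOnesCol_transpose_mul_mul (A : Matrix (Fin n) (Fin n) ℝ) :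
    sqSum ((normalizedOnesCol n)ᵀ * A * normalizedOnesCol n) = (∑ i, ∑ j, A i j) ^ 2 / n ^ 2 := by
  simp [sqSum, normalizedOnesCol, mul_apply, ← Finset.sum_mul, ← Finset.mul_sum, mul_pow,
    div_eq_mul_inv]
  rw [Finset.sum_comm]
  ring

end normalizedOnesCol

lemma frobSq_eq_sum_eigDesc_sq_add {n : ℕ} (hn : n ≠ 0) {C : Matrix (Fin n) (Fin n) ℝ}
    (hC : C.IsHermitian) {V : Matrix (Fin n) (Fin (n - 1)) ℝ}
    (hV1 : Vᵀ *ᵥ (fun _ => (1 : ℝ)) = 0) (hV2 : Vᵀ * V = 1) :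
    frobSq C = ∑ i, eigDesc (conjHerm V hC) i ^ 2
      + 2 / n * vnorm ((Vᵀ * C) *ᵥ fun _ => (1 : ℝ)) ^ 2 + (∑ i, ∑ j, C i j) ^ 2 / n ^ 2 := by
  set w := normalizedOnesCol n
  have hres : V * Vᵀ + w * wᵀ = 1 :=
    mul_transpose_add_mul_transpose_eq_one ((finCongr (by omega)).trans finSumFinEquiv.symm) hV2
      (transpose_mul_normalizedOnesCol hV1) (normalizedOnesCol_transpose_mul_self hn)
  have hCt : Cᵀ = C := by rwa [IsHermitian, conjTranspose_eq_transpose_of_trivial] at hC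
  have hsymm : wᵀ * C * V = (Vᵀ * C * w)ᵀ := by
    rw [transpose_mul, transpose_mul, hCt, transpose_transpose, Matrix.mul_assoc]
  rw [sum_eigDesc_sq, frobSq_eq_sqSum, frobSq_eq_sqSum,
    sqSum_eq_add_of_mul_transpose_add_mul_transpose_eq_one hres C, hsymm, sqSum_transpose,
    sqSum_mul_normalizedOnesCol, sqSum_normalizedOnesCol_transpose_mul_mul]
  ring

/-- Nonnegativity of the closed-form lower bound `OGW_lb`. -/
theorem OGWlb_nonneg (n : ℕ) (hn : 2 ≤ n)
    (C D : Matrix (Fin n) (Fin n) ℝ) (hC : C.IsHermitian) (hD : D.IsHermitian)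
    (V : Matrix (Fin n) (Fin (n - 1)) ℝ)
    (hV1 : Vᵀ *ᵥ (fun _ => (1 : ℝ)) = 0) (hV2 : Vᵀ * V = 1) :
    0 ≤ OGWlb V C D hC hD := by
  have hn0 : n ≠ 0 := by omega
  unfold OGWlb
  rw [frobSq_eq_sum_eigDesc_sq_add hn0 hC hV1 hV2, frobSq_eq_sum_eigDesc_sq_add hn0 hD hV1 hV2]
  set a := eigDesc (conjHerm V hC)
  set b := eigDesc (conjHerm V hD)
  set p := vnorm ((Vᵀ * C) *ᵥ fun _ => (1 : ℝ))
  set q := vnorm ((Vᵀ * D) *ᵥ fun _ => (1 : ℝ))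
  set S := ∑ i, ∑ j, C i j
  set T := ∑ i, ∑ j, D i j
  have hab : 2 * ∑ i, a i * b i ≤ ∑ i, a i ^ 2 + ∑ i, b i ^ 2 := by
    rw [Finset.mul_sum, ← Finset.sum_add_distrib]
    exact Finset.sum_le_sum fun i _ => by linarith [two_mul_le_add_sq (a i) (b i)]
  have hpq : 0 ≤ 2 / (n : ℝ) * (p - q) ^ 2 := by positivity
  have hST : 0 ≤ (S - T) ^ 2 / (n : ℝ) ^ 2 := by positivity
  apply mul_nonneg (by positivity)
  linear_combination hab + hpq + hST

end
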